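/- (Perfect secrecy necessity, Shannon) If M (message), K (key), and C (ciphertext) are discrete random variables such that M is determined by (C,K) (decodability, H(M|C,K)=0) and I(M;C)=0 (perfect secrecy), then H(K) ≥ H(M). -/
import Mathlib


open Finset Real

namespace SKA

variable {Ω : Type*} [Fintype Ω]

/-- Probability mass of the value `a` of random variable `X` under the weight `w`. -/
noncomputable def pm {Ω α : Type*} [Fintype Ω] [DecidableEq α]
    (w : Ω → ℝ) (X : Ω → α) (a : α) : ℝ :=
  ∑ ω ∈ Finset.univ.filter (fun ω => X ω = a), w ω

/-- `w` is a probability mass function on `Ω`. -/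
def IsPMF {Ω : Type*} [Fintype Ω] (w : Ω → ℝ) : Prop :=
  (∀ ω, 0 ≤ w ω) ∧ ∑ ω, w ω = 1

/-- Shannon entropy (in bits) of a discrete random variable `X`. -/
noncomputable def ent {Ω α : Type*} [Fintype Ω] [Fintype α] [DecidableEq α]
    (w : Ω → ℝ) (X : Ω → α) : ℝ :=
  -∑ a, pm w X a * Real.logb 2 (pm w X a)

/-- Conditional entropy `H(X | Y)` (in bits). -/
noncomputable def condEnt {Ω α β : Type*} [Fintype Ω] [Fintype α] [DecidableEq α]
    [Fintype β] [DecidableEq β] (w : Ω → ℝ) (X : Ω → α) (Y : Ω → β) : ℝ :=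
  ent w (fun ω => (X ω, Y ω)) - ent w Y

/-- Mutual information `I(X ; Y)` (in bits). -/
noncomputable def mi {Ω α β : Type*} [Fintype Ω] [Fintype α] [DecidableEq α]
    [Fintype β] [DecidableEq β] (w : Ω → ℝ) (X : Ω → α) (Y : Ω → β) : ℝ :=
  ent w X + ent w Y - ent w (fun ω => (X ω, Y ω))

/-- Conditional mutual information `I(X ; Y | Z)` (in bits). -/
noncomputable def cmi {Ω α β γ : Type*} [Fintype Ω] [Fintype α] [DecidableEq α]
    [Fintype β] [DecidableEq β] [Fintype γ] [DecidableEq γ]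
    (w : Ω → ℝ) (X : Ω → α) (Y : Ω → β) (Z : Ω → γ) : ℝ :=
  condEnt w X Z + condEnt w Y Z - condEnt w (fun ω => (X ω, Y ω)) Z

/-- `X` and `Z` are conditionally independent given `Y` (Markov chain `X → Y → Z`). -/
def CondIndep {Ω α β γ : Type*} [Fintype Ω] [DecidableEq α] [DecidableEq β] [DecidableEq γ]
    (w : Ω → ℝ) (X : Ω → α) (Z : Ω → γ) (Y : Ω → β) : Prop :=
  ∀ (a : α) (b : β) (c : γ),
    pm w (fun ω => (X ω, Y ω, Z ω)) (a, b, c) * pm w Y b =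
      pm w (fun ω => (X ω, Y ω)) (a, b) * pm w (fun ω => (Y ω, Z ω)) (b, c)

/-- The binary entropy function (in bits). -/
noncomputable def Hb (x : ℝ) : ℝ :=
  -(x * Real.logb 2 x) - (1 - x) * Real.logb 2 (1 - x)

/-- Binary convolution `a ∗ b = a(1−b) + (1−a)b`. -/
def bconv (a b : ℝ) : ℝ := a * (1 - b) + (1 - a) * b

lemma pm_nonneg {α : Type*} [DecidableEq α] {w : Ω → ℝ} (hw : ∀ ω, 0 ≤ w ω)
    (X : Ω → α) (a : α) : 0 ≤ pm w X a :=
  Finset.sum_nonneg fun ω _ => hw ω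

lemma sum_pm {α : Type*} [Fintype α] [DecidableEq α] (w : Ω → ℝ) (X : Ω → α) :
    ∑ a, pm w X a = ∑ ω, w ω :=
  Finset.sum_fiberwise_of_maps_to (fun ω _ => Finset.mem_univ (X ω)) w

lemma pm_pair_fst {α β : Type*} [Fintype α] [DecidableEq α] [Fintype β] [DecidableEq β]
    (w : Ω → ℝ) (X : Ω → α) (Y : Ω → β) (a : α) :
    ∑ b, pm w (fun ω => (X ω, Y ω)) (a, b) = pm w X a := by
  classical
  have h := Finset.sum_fiberwise_of_maps_to
    (s := Finset.univ.filter (fun ω => X ω = a)) (t := (Finset.univ : Finset β))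
    (g := Y) (fun ω _ => Finset.mem_univ (Y ω)) w
  rw [pm, ← h]
  refine Finset.sum_congr rfl fun b _ => ?_
  rw [pm, Finset.filter_filter]
  apply Finset.sum_congr _ (fun _ _ => rfl)
  ext ω
  simp [Prod.ext_iff, and_comm]

lemma pm_pair_snd {α β : Type*} [Fintype α] [DecidableEq α] [Fintype β] [DecidableEq β]
    (w : Ω → ℝ) (X : Ω → α) (Y : Ω → β) (b : β) :
    ∑ a, pm w (fun ω => (X ω, Y ω)) (a, b) = pm w Y b := by
  classical
  have h := Finset.sum_fiberwise_of_maps_to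
    (s := Finset.univ.filter (fun ω => Y ω = b)) (t := (Finset.univ : Finset α))
    (g := X) (fun ω _ => Finset.mem_univ (X ω)) w
  rw [pm, ← h]
  refine Finset.sum_congr rfl fun a _ => ?_
  rw [pm, Finset.filter_filter]
  apply Finset.sum_congr _ (fun _ _ => rfl)
  ext ω
  simp [Prod.ext_iff, and_comm]

lemma pm_le_pair_snd {α β : Type*} [Fintype α] [DecidableEq α] [Fintype β] [DecidableEq β]
    {w : Ω → ℝ} (hw : ∀ ω, 0 ≤ w ω) (X : Ω → α) (Y : Ω → β) (a : α) (b : β) :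
    pm w (fun ω => (X ω, Y ω)) (a, b) ≤ pm w Y b := by
  rw [← pm_pair_snd w X Y b]
  exact Finset.single_le_sum (f := fun a' => pm w (fun ω => (X ω, Y ω)) (a', b))
    (fun a' _ => pm_nonneg hw _ _) (Finset.mem_univ a)

lemma ent_comp {α β : Type*} [Fintype α] [DecidableEq α] [Fintype β] [DecidableEq β]
    (w : Ω → ℝ) (X : Ω → α) (g : α → β) (hg : Function.Injective g) :
    ent w (fun ω => g (X ω)) = ent w X := by
  unfold ent
  congr 1
  have h0 : ∀ b ∈ (Finset.univ : Finset β), b ∉ Finset.univ.image g →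
      pm w (fun ω => g (X ω)) b * logb 2 (pm w (fun ω => g (X ω)) b) = 0 := by
    intro b _ hb
    have : pm w (fun ω => g (X ω)) b = 0 := by
      refine Finset.sum_eq_zero fun ω hω => ?_
      simp only [Finset.mem_filter] at hω
      exact ((hb (Finset.mem_image.2 ⟨X ω, Finset.mem_univ _, hω.2⟩))).elim
    rw [this]; simp
  rw [← Finset.sum_subset (Finset.subset_univ (Finset.univ.image g)) h0,
    Finset.sum_image (fun a _ a' _ h => hg h)]
  refine Finset.sum_congr rfl fun a _ => ?_
  have : pm w (fun ω => g (X ω)) (g a) = pm w X a := by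
    rw [pm, pm]
    apply Finset.sum_congr _ (fun _ _ => rfl)
    ext ω
    simp [hg.eq_iff]
  rw [this]

lemma pm_le_pair_fst {α β : Type*} [Fintype α] [DecidableEq α] [Fintype β] [DecidableEq β]
    {w : Ω → ℝ} (hw : ∀ ω, 0 ≤ w ω) (X : Ω → α) (Y : Ω → β) (a : α) (b : β) :
    pm w (fun ω => (X ω, Y ω)) (a, b) ≤ pm w X a := by
  rw [← pm_pair_fst w X Y a]
  exact Finset.single_le_sum (f := fun b' => pm w (fun ω => (X ω, Y ω)) (a, b'))
    (fun b' _ => pm_nonneg hw _ _) (Finset.mem_univ b)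

lemma ent_snd_le {α β : Type*} [Fintype α] [DecidableEq α] [Fintype β] [DecidableEq β]
    {w : Ω → ℝ} (hw : ∀ ω, 0 ≤ w ω) (X : Ω → α) (Y : Ω → β) :
    ent w Y ≤ ent w (fun ω => (X ω, Y ω)) := by
  unfold ent
  apply neg_le_neg
  rw [Fintype.sum_prod_type, Finset.sum_comm]
  have key : ∀ b, pm w Y b * logb 2 (pm w Y b)
      = ∑ a, pm w (fun ω => (X ω, Y ω)) (a, b) * logb 2 (pm w Y b) := by
    intro b; rw [← Finset.sum_mul, pm_pair_snd]
  calc ∑ b, ∑ a, pm w (fun ω => (X ω, Y ω)) (a, b)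
          * logb 2 (pm w (fun ω => (X ω, Y ω)) (a, b))
      ≤ ∑ b, ∑ a, pm w (fun ω => (X ω, Y ω)) (a, b) * logb 2 (pm w Y b) := by
        refine Finset.sum_le_sum fun b _ => Finset.sum_le_sum fun a _ => ?_
        rcases eq_or_lt_of_le (pm_nonneg hw (fun ω => (X ω, Y ω)) (a, b)) with h | h
        · rw [← h]; simp
        · exact mul_le_mul_of_nonneg_left
            (Real.logb_le_logb_of_le one_lt_two h (pm_le_pair_snd hw X Y a b)) h.le
    _ = ∑ b, pm w Y b * logb 2 (pm w Y b) := by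
        exact Finset.sum_congr rfl fun b _ => (key b).symm

lemma gibbs {ι : Type*} [Fintype ι] (p f : ι → ℝ) (hp : ∀ i, 0 ≤ p i)
    (hp1 : ∑ i, p i = 1) (hf : ∀ i, 0 < p i → 0 < f i)
    (hpf : ∑ i, p i * f i ≤ 1) :
    ∑ i, p i * Real.log (f i) ≤ 0 := by
  classical
  set T := Finset.univ.filter (fun i => 0 < p i) with hT
  have hmemT : ∀ i ∈ T, 0 < p i := fun i hi => (Finset.mem_filter.1 hi).2
  have hnotT : ∀ i, i ∉ T → p i = 0 := by
    intro i hi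
    have : ¬ 0 < p i := by
      intro h; exact hi (Finset.mem_filter.2 ⟨Finset.mem_univ i, h⟩)
    linarith [hp i, not_lt.1 this]
  have hpT : ∑ i ∈ T, p i = 1 := by
    rw [Finset.sum_subset (Finset.subset_univ T) (fun i _ hi => hnotT i hi), hp1]
  have jensen := (strictConcaveOn_log_Ioi.concaveOn).le_map_sum
    (t := T) (w := p) (p := f) (fun i _ => hp i) hpT
    (fun i hi => Set.mem_Ioi.2 (hf i (hmemT i hi)))
  have h2 : Real.log (∑ i ∈ T, p i • f i) ≤ 0 := by
    apply Real.log_nonpos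
    · exact Finset.sum_nonneg fun i hi =>
        smul_nonneg (hp i) (hf i (hmemT i hi)).le
    · calc ∑ i ∈ T, p i • f i = ∑ i, p i * f i := by
            refine Finset.sum_subset (Finset.subset_univ T) ?_
            intro i _ hi; simp [hnotT i hi]
        _ ≤ 1 := hpf
  have h3 : ∑ i, p i * Real.log (f i) = ∑ i ∈ T, p i • Real.log (f i) := by
    symm
    refine Finset.sum_subset (Finset.subset_univ T) ?_
    intro i _ hi; simp [hnotT i hi]
  rw [h3]
  exact jensen.trans h2

lemma mi_nonneg_aux {α β : Type*} [Fintype α] [DecidableEq α] [Fintype β] [DecidableEq β]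
    {w : Ω → ℝ} (hw : IsPMF w) (X : Ω → α) (Y : Ω → β) :
    ent w (fun ω => (X ω, Y ω)) ≤ ent w X + ent w Y := by
  classical
  set p : α × β → ℝ := pm w (fun ω => (X ω, Y ω)) with hpdef
  set q : α → ℝ := pm w X with hqdef
  set r : β → ℝ := pm w Y with hrdef
  have hq1 : ∑ a, q a = 1 := by rw [hqdef, sum_pm, hw.2]
  have hr1 : ∑ b, r b = 1 := by rw [hrdef, sum_pm, hw.2]
  have hp1 : ∑ ab, p ab = 1 := by rw [hpdef, sum_pm, hw.2]
  have hpn : ∀ ab, 0 ≤ p ab := fun ab => pm_nonneg hw.1 _ _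
  have hqn : ∀ a, 0 ≤ q a := fun a => pm_nonneg hw.1 _ _
  have hrn : ∀ b, 0 ≤ r b := fun b => pm_nonneg hw.1 _ _
  have hpq : ∀ a b, p (a, b) ≤ q a := fun a b => pm_le_pair_fst hw.1 X Y a b
  have hpr : ∀ a b, p (a, b) ≤ r b := fun a b => pm_le_pair_snd hw.1 X Y a b
  -- rewrite ent X and ent Y as sums over pairs
  have hentX : ent w X = -∑ ab : α × β, p ab * logb 2 (q ab.1) := by
    rw [ent, Fintype.sum_prod_type]
    congr 1
    refine Finset.sum_congr rfl fun a _ => ?_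
    nth_rewrite 1 [← pm_pair_fst w X Y a]
    rw [Finset.sum_mul]
  have hentY : ent w Y = -∑ ab : α × β, p ab * logb 2 (r ab.2) := by
    rw [ent, Fintype.sum_prod_type_right]
    congr 1
    refine Finset.sum_congr rfl fun b _ => ?_
    nth_rewrite 1 [← pm_pair_snd w X Y b]
    rw [Finset.sum_mul]
  set f : α × β → ℝ := fun ab => q ab.1 * r ab.2 / p ab with hfdef
  have hf : ∀ ab, 0 < p ab → 0 < f ab := by
    intro ab h
    exact div_pos (mul_pos (lt_of_lt_of_le h (hpq ab.1 ab.2))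
      (lt_of_lt_of_le h (hpr ab.1 ab.2))) h
  have hpf : ∑ ab, p ab * f ab ≤ 1 := by
    calc ∑ ab : α × β, p ab * f ab ≤ ∑ ab : α × β, q ab.1 * r ab.2 := by
          refine Finset.sum_le_sum fun ab _ => ?_
          rcases eq_or_lt_of_le (hpn ab) with h | h
          · rw [← h]; simpa using mul_nonneg (hqn ab.1) (hrn ab.2)
          · rw [hfdef]; rw [mul_div_cancel₀ _ (ne_of_gt h)]
      _ = 1 := by
          rw [Fintype.sum_prod_type]
          simp_rw [← Finset.mul_sum]
          rw [← Finset.sum_mul, hq1, hr1, one_mul]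
  have hgibbs := gibbs p f hpn hp1 hf hpf
  have hterm : ∀ ab : α × β, p ab * Real.log (f ab)
      = (p ab * logb 2 (q ab.1) + p ab * logb 2 (r ab.2) - p ab * logb 2 (p ab)) * Real.log 2 := by
    intro ab
    rcases eq_or_lt_of_le (hpn ab) with h | h
    · rw [← h]; ring
    · have hq : (0:ℝ) < q ab.1 := lt_of_lt_of_le h (hpq ab.1 ab.2)
      have hr : (0:ℝ) < r ab.2 := lt_of_lt_of_le h (hpr ab.1 ab.2)
      rw [hfdef]
      simp only []
      rw [Real.log_div (by positivity) (ne_of_gt h), Real.log_mul (ne_of_gt hq) (ne_of_gt hr)]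
      rw [Real.logb, Real.logb, Real.logb]
      have h2 : Real.log 2 ≠ 0 := ne_of_gt (Real.log_pos one_lt_two)
      field_simp
  have hsum : ∑ ab, p ab * Real.log (f ab)
      = (∑ ab : α × β, (p ab * logb 2 (q ab.1) + p ab * logb 2 (r ab.2)
          - p ab * logb 2 (p ab))) * Real.log 2 := by
    rw [Finset.sum_mul]
    exact Finset.sum_congr rfl fun ab _ => hterm ab
  have hlog2 : (0:ℝ) < Real.log 2 := Real.log_pos (by norm_num)
  have hS : ∑ ab : α × β, (p ab * logb 2 (q ab.1) + p ab * logb 2 (r ab.2)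
      - p ab * logb 2 (p ab)) ≤ 0 := by
    by_contra hcon
    push_neg at hcon
    nlinarith [hsum, hgibbs]
  rw [Finset.sum_sub_distrib, Finset.sum_add_distrib] at hS
  have : ent w (fun ω => (X ω, Y ω)) = -∑ ab : α × β, p ab * logb 2 (p ab) := by
    rw [ent, hpdef]
  rw [this, hentX, hentY]
  linarith

lemma mi_nonneg {α β : Type*} [Fintype α] [DecidableEq α] [Fintype β] [DecidableEq β]
    {w : Ω → ℝ} (hw : IsPMF w) (X : Ω → α) (Y : Ω → β) :
    0 ≤ mi w X Y := by
  have := mi_nonneg_aux hw X Y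
  rw [mi]; linarith

/-- Shannon's necessity of key size for perfect secrecy: if H(M|C,K)=0
    (decodability) and I(M;C)=0 (perfect secrecy), then H(K) ≥ H(M). -/
theorem stmt_14 {Ω ℳ 𝒦 𝒞 : Type*} [Fintype Ω]
    [Fintype ℳ] [DecidableEq ℳ] [Fintype 𝒦] [DecidableEq 𝒦]
    [Fintype 𝒞] [DecidableEq 𝒞]
    (w : Ω → ℝ) (hw : IsPMF w)
    (M : Ω → ℳ) (K : Ω → 𝒦) (C : Ω → 𝒞)
    (hdec : condEnt w M (fun ω => (C ω, K ω)) = 0)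
    (hsec : mi w M C = 0) :
    ent w K ≥ ent w M := by
  have hwn := hw.1
  have h1 : condEnt w M C = ent w M := by
    rw [mi] at hsec; rw [condEnt]; linarith
  have e1 : ent w (fun ω => (K ω, (M ω, C ω))) = ent w (fun ω => ((M ω, K ω), C ω)) :=
    ent_comp w (fun ω => ((M ω, K ω), C ω))
      (fun x => (x.1.2, (x.1.1, x.2)))
      (fun x y h => by
        simp only [Prod.ext_iff] at h ⊢
        tauto)
  have h2 : condEnt w M C ≤ condEnt w (fun ω => (M ω, K ω)) C := by
    rw [condEnt, condEnt]
    have := ent_snd_le hwn K (fun ω => (M ω, C ω))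
    rw [e1] at this
    linarith
  have e2 : ent w (fun ω => (C ω, K ω)) = ent w (fun ω => (K ω, C ω)) :=
    ent_comp w (fun ω => (K ω, C ω)) Prod.swap Prod.swap_injective
  have e3 : ent w (fun ω => (M ω, (C ω, K ω))) = ent w (fun ω => ((M ω, K ω), C ω)) :=
    ent_comp w (fun ω => ((M ω, K ω), C ω))
      (fun x => (x.1.1, (x.2, x.1.2)))
      (fun x y h => by
        simp only [Prod.ext_iff] at h ⊢
        tauto)
  have h3 : condEnt w (fun ω => (M ω, K ω)) C
      = condEnt w K C + condEnt w M (fun ω => (C ω, K ω)) := by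
    rw [condEnt, condEnt, condEnt]
    linarith
  have h4 : condEnt w K C ≤ ent w K := by
    have := mi_nonneg hw K C
    rw [mi] at this; rw [condEnt]; linarith
  linarith

end SKA
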